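/- Let ū = (u_i)_{i ∈ I} be a (finite or one-sided infinite) sequence of primitive generalized words over Σ. Then the concatenation Π_{i ∈ I} u_i has as its set of blocks exactly the union of the blocks of the u_i (i.e., ū does not merge) if and only if ū contains no factor matching a left-hand side of the rewriting system R, where R has rules: (u₁, u₂, u₃) → u when u₁ = u₃ = u = Γ^{η} for some Γ ⊆ Σ and u₂ is a single symbol of Γ; (u₁, u₂) → u₁u₂ when u₁ is right-closed and u₂ is left-closed; (u₁, u₂) → Γ^{η} when u₁ = u₂ = Γ^{η}. -/

import Mathlib

section

variable {S : Type*}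

/-- `c : ℚ → S` is the dense `Γ`-coloring of the rationals (the word `Γ^η`). -/
def GammaEta (Γ : Finset S) (c : ℚ → S) : Prop :=
  (∀ x, c x ∈ Γ) ∧ ∀ q r : ℚ, q < r → ∀ a ∈ Γ, ∃ x : ℚ, q < x ∧ x < r ∧ c x = a

variable {α : Type*} [LinearOrder α]

/-- `I` is a uniform subword of the colored order `(α, cc)`: an interval that is
isomorphic, as a colored order, to `Γ^η` for some finite `Γ`. -/
def UniformOn (cc : α → S) (I : Set α) : Prop :=
  I.OrdConnected ∧ ∃ (Γ : Finset S) (d : ℚ → S), GammaEta Γ d ∧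
    ∃ e : I ≃o ℚ, ∀ x : I, d (e x) = cc x

/-- `J` is a (nonempty) successor-closed subword of `(α, cc)`: an interval none
of whose points lies in a uniform subword, closed under existing successors and
predecessors. -/
def SuccClosedOn (cc : α → S) (J : Set α) : Prop :=
  J.OrdConnected ∧ J.Nonempty ∧
    (∀ x ∈ J, ∀ I : Set α, UniformOn cc I → x ∉ I) ∧
    (∀ x ∈ J, ∀ y, (x < y ∧ ∀ z, x < z → y ≤ z) → y ∈ J) ∧
    (∀ x ∈ J, ∀ y, (y < x ∧ ∀ z, z < x → z ≤ y) → y ∈ J)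

/-- A block of `(α, cc)`: a maximal uniform subword or a minimal
successor-closed subword. -/
def IsBlock (cc : α → S) (B : Set α) : Prop :=
  (UniformOn cc B ∧ ∀ I : Set α, UniformOn cc I → B ⊆ I → I = B) ∨
  (SuccClosedOn cc B ∧ ∀ J : Set α, SuccClosedOn cc J → J ⊆ B → J = B)

/-- A generalized word is primitive if it consists of a single block. -/
def Primitive (cc : α → S) : Prop := IsBlock cc Set.univ

/-- The colored order `(α, cc)` is isomorphic to `Γ^η`. -/
def IsoToGammaEta (cc : α → S) (Γ : Finset S) : Prop :=
  ∃ d : ℚ → S, GammaEta Γ d ∧ ∃ e : α ≃o ℚ, ∀ x, d (e x) = cc x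

/-- The colored order `(α, cc)` is a single point colored `a`. -/
def SinglePointWord (cc : α → S) (a : S) : Prop :=
  (∃ x : α, ∀ y : α, y = x) ∧ ∀ x, cc x = a

end

/-!
Write `C_i` for the copy of `u_i` in `Π u_i`. If `ū` does not merge, every `C_i` is a block, and
each left-hand side of `R` contradicts this: after a right-closed `u_i` and a left-closed
`u_{i+1}`, the last point of `C_i` is covered by a point outside `C_i`; and `Γ^η Γ^η` or
`Γ^η a Γ^η` starting at `i` glues to a uniform subword strictly containing `C_i`.

Conversely, if no rule applies, a covering pair never crosses two factors, and a uniform subword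
`K` never meets two factors. Otherwise `K` meets two adjacent factors, at least one of them in
two points. A primitive factor meeting `K` in two points contains a uniform interval, so it is
`Γ^η` for the palette `Γ` of `K`; a factor meeting `K` in one point is that single letter, and
`K` meets both of its neighbours in two points. So `K` spans `Γ^η Γ^η` or `Γ^η a Γ^η`. Hence
each `C_i` is a block, and every block lies within, hence equals, some `C_i`.
-/

section UniformWith

open Set

variable {S α β : Type*} [LinearOrder α] [LinearOrder β] {cc : α → S} {Γ Γ' : Finset S}
  {A B K M U : Set α} {x y : α}

def UniformWith (cc : α → S) (Γ : Finset S) (K : Set α) : Prop :=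
  K.OrdConnected ∧ ∃ d : ℚ → S, GammaEta Γ d ∧ ∃ e : K ≃o ℚ, ∀ x : K, d (e x) = cc x

theorem uniformOn_iff : UniformOn cc K ↔ ∃ Γ, UniformWith cc Γ K :=
  ⟨fun ⟨h, Γ, h'⟩ => ⟨Γ, h, h'⟩, fun ⟨Γ, h, h'⟩ => ⟨h, Γ, h'⟩⟩

theorem uniformWith_univ_iff : UniformWith cc Γ univ ↔ IsoToGammaEta cc Γ :=
  ⟨fun ⟨_, d, hd, e, he⟩ => ⟨d, hd, OrderIso.Set.univ.symm.trans e, fun _ => he _⟩,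
    fun ⟨d, hd, e, he⟩ => ⟨ordConnected_univ, d, hd, OrderIso.Set.univ.trans e, fun _ => he _⟩⟩

namespace UniformWith

theorem uniformOn (h : UniformWith cc Γ K) : UniformOn cc K := uniformOn_iff.mpr ⟨Γ, h⟩

theorem ordConnected (h : UniformWith cc Γ K) : K.OrdConnected := h.1

theorem mem_color (h : UniformWith cc Γ K) (hx : x ∈ K) : cc x ∈ Γ := by
  obtain ⟨-, d, hd, e, he⟩ := h
  exact he ⟨x, hx⟩ ▸ hd.1 _

theorem nonempty (h : UniformWith cc Γ K) : K.Nonempty := by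
  obtain ⟨-, -, -, e, -⟩ := h
  exact ⟨e.symm 0, (e.symm 0).2⟩

theorem countable (h : UniformWith cc Γ K) : K.Countable := by
  obtain ⟨-, -, -, e, -⟩ := h
  exact countable_coe_iff.mp (Countable.of_equiv ℚ e.symm.toEquiv)

theorem exists_gt (h : UniformWith cc Γ K) (hx : x ∈ K) : ∃ y ∈ K, x < y := by
  obtain ⟨-, -, -, e, -⟩ := h
  obtain ⟨q, hq⟩ := NoMaxOrder.exists_gt (e ⟨x, hx⟩)
  exact ⟨e.symm q, (e.symm q).2, e.lt_symm_apply.mpr hq⟩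

theorem exists_lt (h : UniformWith cc Γ K) (hx : x ∈ K) : ∃ y ∈ K, y < x := by
  obtain ⟨-, -, -, e, -⟩ := h
  obtain ⟨q, hq⟩ := NoMinOrder.exists_lt (e ⟨x, hx⟩)
  exact ⟨e.symm q, (e.symm q).2, e.symm_apply_lt.mpr hq⟩

theorem color_dense (h : UniformWith cc Γ K) (hx : x ∈ K) (hy : y ∈ K) (hxy : x < y)
    {a : S} (ha : a ∈ Γ) : ∃ z ∈ K, x < z ∧ z < y ∧ cc z = a := by
  obtain ⟨-, d, hd, e, he⟩ := h
  obtain ⟨q, hxq, hqy, rfl⟩ :=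
    hd.2 _ _ (e.lt_iff_lt.mpr (show (⟨x, hx⟩ : K) < ⟨y, hy⟩ from hxy)) _ ha
  exact ⟨e.symm q, (e.symm q).2, e.lt_symm_apply.mpr hxq, e.symm_apply_lt.mpr hqy,
    by rw [← he, e.apply_symm_apply]⟩

theorem exists_between (h : UniformWith cc Γ K) (hx : x ∈ K) (hy : y ∈ K) (hxy : x < y) :
    ∃ z ∈ K, x < z ∧ z < y :=
  let ⟨z, hz, hxz, hzy, _⟩ := h.color_dense hx hy hxy (h.mem_color hx)
  ⟨z, hz, hxz, hzy⟩

/-- Cantor's back-and-forth theorem, relativised to an interval. -/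
theorem of_colorDense (hU : U.OrdConnected) (hcount : U.Countable) (hne : U.Nonempty)
    (hgt : ∀ x ∈ U, ∃ y ∈ U, x < y) (hlt : ∀ x ∈ U, ∃ y ∈ U, y < x)
    (hmem : ∀ x ∈ U, cc x ∈ Γ)
    (hdense : ∀ x ∈ U, ∀ y ∈ U, x < y → ∀ a ∈ Γ, ∃ z ∈ U, x < z ∧ z < y ∧ cc z = a) :
    UniformWith cc Γ U := by
  have : Countable U := hcount.to_subtype
  have : Nonempty U := hne.to_subtype
  have : NoMaxOrder U := ⟨fun x => let ⟨y, hy, hxy⟩ := hgt x x.2; ⟨⟨y, hy⟩, hxy⟩⟩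
  have : NoMinOrder U := ⟨fun x => let ⟨y, hy, hyx⟩ := hlt x x.2; ⟨⟨y, hy⟩, hyx⟩⟩
  have : DenselyOrdered U := ⟨fun x y hxy =>
    let ⟨z, hz, hxz, hzy, _⟩ := hdense x x.2 y y.2 hxy _ (hmem x x.2); ⟨⟨z, hz⟩, hxz, hzy⟩⟩
  obtain ⟨e⟩ := Order.iso_of_countable_dense U ℚ
  refine ⟨hU, fun q => cc (e.symm q), ⟨fun q => hmem _ (e.symm q).2, fun q r hqr a ha => ?_⟩,
    e, fun x => by simp⟩
  obtain ⟨z, hz, hqz, hzr, rfl⟩ :=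
    hdense _ (e.symm q).2 _ (e.symm r).2 (e.symm.lt_iff_lt.mpr hqr) a ha
  exact ⟨e ⟨z, hz⟩, e.symm_apply_lt.mp hqz, e.lt_symm_apply.mp hzr, by simp⟩

theorem Ioo (h : UniformWith cc Γ K) (hx : x ∈ K) (hy : y ∈ K) (hxy : x < y) :
    UniformWith cc Γ (Ioo x y) := by
  have hsub : Set.Ioo x y ⊆ K := fun z hz => h.ordConnected.out hx hy (Ioo_subset_Icc_self hz)
  refine of_colorDense ordConnected_Ioo (h.countable.mono hsub) ?_ ?_ ?_
    (fun z hz => h.mem_color (hsub hz)) ?_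
  · obtain ⟨z, -, hz⟩ := h.exists_between hx hy hxy
    exact ⟨z, hz⟩
  · intro z hz
    obtain ⟨w, -, hzw, hwy⟩ := h.exists_between (hsub hz) hy hz.2
    exact ⟨w, ⟨hz.1.trans hzw, hwy⟩, hzw⟩
  · intro z hz
    obtain ⟨w, -, hxw, hwz⟩ := h.exists_between hx (hsub hz) hz.1
    exact ⟨w, ⟨hxw, hwz.trans hz.2⟩, hwz⟩
  · intro u hu v hv huv a ha
    obtain ⟨w, -, huw, hwv, hw⟩ := h.color_dense (hsub hu) (hsub hv) huv ha
    exact ⟨w, ⟨hu.1.trans huw, hwv.trans hv.2⟩, huw, hwv, hw⟩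

theorem palette_eq_of_subset (hA : UniformWith cc Γ A) (hB : UniformWith cc Γ' B)
    (hAB : A ⊆ B) : Γ = Γ' := by
  obtain ⟨x, hx⟩ := hA.nonempty
  obtain ⟨y, hy, hxy⟩ := hA.exists_gt hx
  ext a
  constructor
  · intro ha
    obtain ⟨z, hz, -, -, rfl⟩ := hA.color_dense hx hy hxy ha
    exact hB.mem_color (hAB hz)
  · intro ha
    obtain ⟨z, -, hxz, hzy, rfl⟩ := hB.color_dense (hAB hx) (hAB hy) hxy ha
    exact hA.mem_color (hA.ordConnected.out hx hy ⟨hxz.le, hzy.le⟩)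

theorem union_union (hA : UniformWith cc Γ A) (hB : UniformWith cc Γ B)
    (hM : M.Subsingleton) (hMΓ : ∀ x ∈ M, cc x ∈ Γ)
    (hAlt : ∀ a ∈ A, ∀ y ∈ M ∪ B, a < y) (hltB : ∀ y ∈ A ∪ M, ∀ b ∈ B, y < b)
    (hU : (A ∪ M ∪ B).OrdConnected) : UniformWith cc Γ (A ∪ M ∪ B) := by
  obtain ⟨a₀, ha₀⟩ := hA.nonempty
  obtain ⟨b₀, hb₀⟩ := hB.nonempty
  refine of_colorDense hU ((hA.countable.union hM.countable).union hB.countable)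
    ⟨a₀, .inl (.inl ha₀)⟩ ?_ ?_ ?_ ?_
  · rintro x ((hx | hx) | hx)
    · exact ⟨b₀, .inr hb₀, hltB x (.inl hx) b₀ hb₀⟩
    · exact ⟨b₀, .inr hb₀, hltB x (.inr hx) b₀ hb₀⟩
    · obtain ⟨y, hy, hxy⟩ := hB.exists_gt hx
      exact ⟨y, .inr hy, hxy⟩
  · rintro x ((hx | hx) | hx)
    · obtain ⟨y, hy, hyx⟩ := hA.exists_lt hx
      exact ⟨y, .inl (.inl hy), hyx⟩
    · exact ⟨a₀, .inl (.inl ha₀), hAlt a₀ ha₀ x (.inl hx)⟩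
    · exact ⟨a₀, .inl (.inl ha₀), hAlt a₀ ha₀ x (.inr hx)⟩
  · rintro x ((hx | hx) | hx)
    exacts [hA.mem_color hx, hMΓ x hx, hB.mem_color hx]
  · intro x hx y hy hxy a ha
    -- it suffices to find two points of `A`, or two points of `B`, in `[x, y]`
    have inA : ∀ {x' y'}, x' ∈ A → y' ∈ A → x ≤ x' → x' < y' → y' ≤ y →
        ∃ z ∈ A ∪ M ∪ B, x < z ∧ z < y ∧ cc z = a := fun hx' hy' h₁ h₂ h₃ =>
      let ⟨z, hz, h₄, h₅, h₆⟩ := hA.color_dense hx' hy' h₂ ha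
      ⟨z, .inl (.inl hz), h₁.trans_lt h₄, h₅.trans_le h₃, h₆⟩
    have inB : ∀ {x' y'}, x' ∈ B → y' ∈ B → x ≤ x' → x' < y' → y' ≤ y →
        ∃ z ∈ A ∪ M ∪ B, x < z ∧ z < y ∧ cc z = a := fun hx' hy' h₁ h₂ h₃ =>
      let ⟨z, hz, h₄, h₅, h₆⟩ := hB.color_dense hx' hy' h₂ ha
      ⟨z, .inr hz, h₁.trans_lt h₄, h₅.trans_le h₃, h₆⟩
    rcases hx with (hx | hx) | hx <;> rcases hy with (hy | hy) | hy
    · exact inA hx hy le_rfl hxy le_rfl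
    · obtain ⟨w, hw, hxw⟩ := hA.exists_gt hx
      exact inA hx hw le_rfl hxw (hAlt w hw y (.inl hy)).le
    · obtain ⟨w, hw, hxw⟩ := hA.exists_gt hx
      exact inA hx hw le_rfl hxw (hAlt w hw y (.inr hy)).le
    · exact absurd hxy (hAlt y hy x (.inl hx)).not_gt
    · exact absurd (hM hx hy) hxy.ne
    · obtain ⟨w, hw, hwy⟩ := hB.exists_lt hy
      exact inB hw hy (hltB x (.inr hx) w hw).le hwy le_rfl
    · exact absurd hxy (hAlt y hy x (.inr hx)).not_gt
    · exact absurd hxy (hltB y (.inr hy) x hx).not_gt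
    · exact inB hx hy le_rfl hxy le_rfl

end UniformWith

theorem IsoToGammaEta.nonempty (h : IsoToGammaEta cc Γ) : Nonempty α :=
  let ⟨_, _, e, _⟩ := h; ⟨e.symm 0⟩

theorem UniformOn.nonempty (h : UniformOn cc K) : K.Nonempty :=
  let ⟨_, hΓ⟩ := uniformOn_iff.mp h; hΓ.nonempty

theorem uniformWith_image_iff {ca : α → S} {cb : β → S} (f : α ↪o β)
    (hf : (range f).OrdConnected) (hcol : ∀ x, cb (f x) = ca x) :
    UniformWith cb Γ (f '' A) ↔ UniformWith ca Γ A := by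
  let j : A ≃o f '' A := StrictMonoOn.orderIso f A (f.strictMono.strictMonoOn A)
  have hoc : (f '' A).OrdConnected ↔ A.OrdConnected := by
    refine ⟨fun h => ?_, fun h => ⟨?_⟩⟩
    · simpa only [f.injective.preimage_image] using h.preimage_mono f.monotone
    · rintro _ ⟨x, hx, rfl⟩ _ ⟨y, hy, rfl⟩ z hz
      obtain ⟨w, rfl⟩ := hf.out (mem_range_self x) (mem_range_self y) hz
      exact mem_image_of_mem f (h.out hx hy ⟨f.le_iff_le.mp hz.1, f.le_iff_le.mp hz.2⟩)
  constructor
  · rintro ⟨h, d, hd, e, he⟩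
    exact ⟨hoc.mp h, d, hd, j.trans e, fun x => (he (j x)).trans (hcol x)⟩
  · rintro ⟨h, d, hd, e, he⟩
    refine ⟨hoc.mpr h, d, hd, j.symm.trans e, fun y => ?_⟩
    obtain ⟨x, rfl⟩ := j.surjective y
    exact (congrArg (d ∘ e) (j.symm_apply_apply x)).trans ((he x).trans (hcol x).symm)

theorem uniformOn_image_iff {ca : α → S} {cb : β → S} (f : α ↪o β)
    (hf : (range f).OrdConnected) (hcol : ∀ x, cb (f x) = ca x) :
    UniformOn cb (f '' A) ↔ UniformOn ca A := by
  simp only [uniformOn_iff, uniformWith_image_iff f hf hcol]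

end UniformWith

section Blocks

open Set

variable {S α β : Type*} [LinearOrder α] [LinearOrder β] {cc : α → S} {J : Set α} {x y : α}

theorem SuccClosedOn.of_covBy (hJ : J.OrdConnected) (hne : J.Nonempty)
    (hK : ∀ x ∈ J, ∀ K, UniformOn cc K → x ∉ K)
    (hsucc : ∀ x ∈ J, ∀ y, x ⋖ y → y ∈ J) (hpred : ∀ y ∈ J, ∀ x, x ⋖ y → x ∈ J) :
    SuccClosedOn cc J :=
  ⟨hJ, hne, hK, fun x hx y h => hsucc x hx y ⟨h.1, fun z hxz hzy => (h.2 z hxz).not_gt hzy⟩,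
    fun y hy x h => hpred y hy x ⟨h.1, fun z hxz hzy => (h.2 z hzy).not_gt hxz⟩⟩

namespace SuccClosedOn

theorem not_mem_of_uniformOn (hJ : SuccClosedOn cc J) (hx : x ∈ J) {K : Set α}
    (hK : UniformOn cc K) : x ∉ K :=
  hJ.2.2.1 x hx K hK

theorem mem_of_mem_of_covBy (hJ : SuccClosedOn cc J) (hx : x ∈ J) (h : x ⋖ y) : y ∈ J :=
  hJ.2.2.2.1 x hx y ⟨h.lt, fun _ => h.ge_of_gt⟩

theorem mem_of_covBy_of_mem (hJ : SuccClosedOn cc J) (h : x ⋖ y) (hy : y ∈ J) : x ∈ J :=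
  hJ.2.2.2.2 y hy x ⟨h.lt, fun _ => h.le_of_lt⟩

theorem preimage {ca : α → S} {cb : β → S} (f : α ↪o β) (hf : (range f).OrdConnected)
    (hcol : ∀ x, cb (f x) = ca x) {J : Set β} (hJ : SuccClosedOn cb J)
    (hne : (f ⁻¹' J).Nonempty) : SuccClosedOn ca (f ⁻¹' J) :=
  .of_covBy (hJ.1.preimage_mono f.monotone) hne
    (fun _ hx _ hK hxK => hJ.not_mem_of_uniformOn hx ((uniformOn_image_iff f hf hcol).mpr hK)
      (mem_image_of_mem f hxK))
    (fun _ hx _ h => hJ.mem_of_mem_of_covBy hx ((hf.apply_covBy_apply_iff f).mpr h))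
    (fun _ hy _ h => hJ.mem_of_covBy_of_mem ((hf.apply_covBy_apply_iff f).mpr h) hy)

end SuccClosedOn

theorem not_isBlock_of_ssubset {B U : Set α} (hU : UniformOn cc U) (hBU : B ⊂ U) :
    ¬ IsBlock cc B := by
  rintro (⟨-, hmax⟩ | ⟨hs, -⟩)
  · exact hBU.ne (hmax U hU hBU.subset).symm
  · obtain ⟨x, hx⟩ := hs.2.1
    exact hs.not_mem_of_uniformOn hx hU (hBU.subset hx)

theorem IsBlock.nonempty {B : Set α} (hB : IsBlock cc B) : B.Nonempty :=
  hB.elim (fun h => h.1.nonempty) (fun h => h.1.2.1)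

namespace Primitive

theorem uniformOn_univ (hp : Primitive cc) {K : Set α} (hK : UniformOn cc K) :
    UniformOn cc univ :=
  (hp.resolve_right fun ⟨hs, _⟩ =>
    let ⟨x, hx⟩ := hK.nonempty; hs.not_mem_of_uniformOn (mem_univ x) hK hx).1

theorem eq_univ_of_succClosedOn (hp : Primitive cc) (hJ : SuccClosedOn cc J) : J = univ :=
  (hp.resolve_left fun ⟨hu, _⟩ =>
    let ⟨x, hx⟩ := hJ.2.1; hJ.not_mem_of_uniformOn hx hu (mem_univ x)).2 J hJ (subset_univ J)

theorem succClosedOn_univ (hp : Primitive cc) (hJ : SuccClosedOn cc J) :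
    SuccClosedOn cc univ :=
  hp.eq_univ_of_succClosedOn hJ ▸ hJ

theorem eq_univ_of_isBlock (hp : Primitive cc) {B : Set α} (hB : IsBlock cc B) : B = univ := by
  rcases hB with ⟨hu, hmax⟩ | ⟨hs, -⟩
  · exact (hmax univ (hp.uniformOn_univ hu) (subset_univ B)).symm
  · exact hp.eq_univ_of_succClosedOn hs

theorem isoToGammaEta (hp : Primitive cc) {Γ : Finset S} {V : Set α}
    (hV : UniformWith cc Γ V) : IsoToGammaEta cc Γ := by
  obtain ⟨Γ', hΓ'⟩ := uniformOn_iff.mp (hp.uniformOn_univ hV.uniformOn)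
  rw [hV.palette_eq_of_subset hΓ' (subset_univ V)]
  exact uniformWith_univ_iff.mp hΓ'

end Primitive

end Blocks

namespace Concat

open Set

variable {S : Type*} {I : Set ℤ} {F : ℤ → Type*}

def index (x : Σₗ i : I, F i.1) : ℤ := (ofLex x).1

theorem index_mem (x : Σₗ i : I, F i.1) : index x ∈ I := (ofLex x).1.2

variable [∀ i, LinearOrder (F i)] {c : ∀ i : ℤ, F i → S} {Γ : Finset S} {i k : ℤ} {hi : i ∈ I}
  {v : F i} {x y z : Σₗ i : I, F i.1} {B K : Set (Σₗ i : I, F i.1)}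

noncomputable def incl (i : ℤ) (hi : i ∈ I) : F i ↪o Σₗ i : I, F i.1 :=
  OrderEmbedding.ofStrictMono (fun y => toLex ⟨⟨i, hi⟩, y⟩)
    fun _ _ h => Sigma.Lex.lt_def.mpr (.inr ⟨rfl, h⟩)

def color (c : ∀ i : ℤ, F i → S) (x : Σₗ i : I, F i.1) : S := c (ofLex x).1.1 (ofLex x).2

@[simp] theorem index_incl (v : F i) : index (incl i hi v) = i := rfl

theorem color_incl (v : F i) : color c (incl i hi v) = c i v := rfl

theorem exists_incl_eq (x : Σₗ i : I, F i.1) : ∃ i hi v, incl (F := F) i hi v = x :=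
  ⟨_, _, (ofLex x).2, rfl⟩

theorem index_mono : Monotone (index : (Σₗ i : I, F i.1) → ℤ) := fun x y h => by
  rcases Sigma.Lex.le_def.mp h with h | ⟨h, -⟩
  · exact h.le
  · exact (congrArg Subtype.val h).le

theorem lt_of_index_lt (h : index x < index y) : x < y := Sigma.Lex.lt_def.mpr (.inl h)

theorem range_incl : range (incl (F := F) i hi) = index ⁻¹' {i} := by
  ext x
  refine ⟨?_, fun h => ?_⟩
  · rintro ⟨v, rfl⟩
    rfl
  · obtain ⟨j, hj, v, rfl⟩ := exists_incl_eq x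
    obtain rfl : j = i := h
    exact ⟨v, rfl⟩

theorem mem_range_incl : x ∈ range (incl i hi) ↔ index x = i := by
  rw [range_incl]
  rfl

theorem ordConnected_range_incl : (range (incl (F := F) i hi)).OrdConnected := by
  rw [range_incl]
  exact ordConnected_singleton.preimage_mono index_mono

theorem uniformWith_image_incl_iff {A : Set (F i)} :
    UniformWith (color c) Γ (incl i hi '' A) ↔ UniformWith (c i) Γ A :=
  uniformWith_image_iff _ ordConnected_range_incl fun _ => rfl

theorem uniformOn_image_incl_iff {A : Set (F i)} :
    UniformOn (color c) (incl i hi '' A) ↔ UniformOn (c i) A :=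
  uniformOn_image_iff _ ordConnected_range_incl fun _ => rfl

theorem uniformOn_range_incl (h : UniformOn (c i) univ) :
    UniformOn (color c) (range (incl i hi)) := by
  rwa [← image_univ, uniformOn_image_incl_iff]

theorem uniformWith_range_incl (h : IsoToGammaEta (c i) Γ) :
    UniformWith (color c) Γ (range (incl i hi)) := by
  rw [← image_univ, uniformWith_image_incl_iff]
  exact uniformWith_univ_iff.mpr h

theorem succClosedOn_preimage_incl {J : Set (Σₗ i : I, F i.1)} (hJ : SuccClosedOn (color c) J)
    (hne : (incl i hi ⁻¹' J).Nonempty) : SuccClosedOn (c i) (incl i hi ⁻¹' J) :=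
  hJ.preimage _ ordConnected_range_incl (fun _ => rfl) hne

def NoClosedJunction (I : Set ℤ) (F : ℤ → Type*) [∀ i, LinearOrder (F i)] : Prop :=
  ∀ i : ℤ, i ∈ I → i + 1 ∈ I →
    ¬ ((∃ mx : F i, ∀ x, x ≤ mx) ∧ (∃ mn : F (i + 1), ∀ x, mn ≤ x))

def NoEtaPair (I : Set ℤ) (c : ∀ i : ℤ, F i → S) : Prop :=
  ∀ i : ℤ, i ∈ I → i + 1 ∈ I →
    ¬ ∃ Γ : Finset S, IsoToGammaEta (c i) Γ ∧ IsoToGammaEta (c (i + 1)) Γ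

def NoEtaLetterEta (I : Set ℤ) (c : ∀ i : ℤ, F i → S) : Prop :=
  ∀ i : ℤ, i ∈ I → i + 1 ∈ I → i + 2 ∈ I →
    ¬ ∃ (Γ : Finset S) (a : S), a ∈ Γ ∧ IsoToGammaEta (c i) Γ ∧
      SinglePointWord (c (i + 1)) a ∧ IsoToGammaEta (c (i + 2)) Γ

theorem exists_mem_index_eq (hI : I.OrdConnected) (hne : ∀ i ∈ I, Nonempty (F i))
    (hK : K.OrdConnected) (hx : x ∈ K) (hy : y ∈ K) (hxk : index x ≤ k) (hky : k ≤ index y) :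
    ∃ z ∈ K, index z = k := by
  rcases hxk.eq_or_lt with rfl | hxk
  · exact ⟨x, hx, rfl⟩
  rcases hky.eq_or_lt with rfl | hky
  · exact ⟨y, hy, rfl⟩
  have hk : k ∈ I := hI.out (index_mem x) (index_mem y) ⟨hxk.le, hky.le⟩
  obtain ⟨v⟩ := hne k hk
  exact ⟨incl k hk v, hK.out hx hy
    ⟨(lt_of_index_lt (y := incl k hk v) hxk).le, (lt_of_index_lt (x := incl k hk v) hky).le⟩, rfl⟩

/-- A covering pair `x ⋖ y` across two factors would make the first factor right-closed and the
second left-closed. -/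
theorem index_eq_of_covBy (hI : I.OrdConnected) (hne : ∀ i ∈ I, Nonempty (F i))
    (hR1 : NoClosedJunction I F) (h : x ⋖ y) : index x = index y := by
  obtain ⟨i, hi, a, rfl⟩ := exists_incl_eq x
  obtain ⟨j, hj, b, rfl⟩ := exists_incl_eq y
  by_contra hij
  have hlt : i < j := (index_mono h.le).lt_of_ne hij
  have hi1 : i + 1 ∈ I := hI.out hi hj ⟨by omega, by omega⟩
  obtain rfl : j = i + 1 := by
    by_contra hj1
    obtain ⟨v⟩ := hne _ hi1
    exact h.2 (lt_of_index_lt (y := incl _ hi1 v) (by simp))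
      (lt_of_index_lt (by simp only [index_incl]; omega))
  refine hR1 i hi hi1 ⟨⟨a, fun u => not_lt.mp fun hau => ?_⟩, ⟨b, fun u => not_lt.mp fun hub => ?_⟩⟩
  · have := index_mono (h.ge_of_gt ((incl i hi).lt_iff_lt.mpr hau))
    simp at this
  · have := index_mono (h.le_of_lt ((incl (i + 1) hi1).lt_iff_lt.mpr hub))
    simp at this

section ThinFibers

variable {cc : (Σₗ i : I, F i.1) → S} {l : ℤ}

theorem exists_index_gt_of_subsingleton (hK : UniformWith cc Γ K) (hx : x ∈ K)
    (hxk : index x = k) (hthin : (K ∩ index ⁻¹' {k}).Subsingleton) :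
    ∃ w ∈ K, k < index w := by
  obtain ⟨w, hw, hxw⟩ := hK.exists_gt hx
  refine ⟨w, hw, hxk ▸ (index_mono hxw.le).lt_of_ne fun h => hxw.ne (hthin ⟨hx, hxk⟩ ⟨hw, ?_⟩)⟩
  exact h.symm.trans hxk

theorem exists_index_lt_of_subsingleton (hK : UniformWith cc Γ K) (hx : x ∈ K)
    (hxk : index x = k) (hthin : (K ∩ index ⁻¹' {k}).Subsingleton) :
    ∃ w ∈ K, index w < k := by
  obtain ⟨w, hw, hwx⟩ := hK.exists_lt hx
  refine ⟨w, hw, hxk ▸ (index_mono hwx.le).lt_of_ne fun h => hwx.ne (hthin ⟨hw, ?_⟩ ⟨hx, hxk⟩)⟩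
  exact h.trans hxk

/-- `K` has points on both sides of `x` outside its factor, so it contains that whole factor. -/
theorem eq_of_index_eq_of_subsingleton (hK : UniformWith cc Γ K) (hx : x ∈ K)
    (hxk : index x = k) (hthin : (K ∩ index ⁻¹' {k}).Subsingleton) (hz : index z = k) :
    z = x := by
  obtain ⟨w, hw, hkw⟩ := exists_index_gt_of_subsingleton hK hx hxk hthin
  obtain ⟨w', hw', hw'k⟩ := exists_index_lt_of_subsingleton hK hx hxk hthin
  have hzK : z ∈ K :=
    hK.ordConnected.out hw' hw ⟨(lt_of_index_lt (by omega)).le, (lt_of_index_lt (by omega)).le⟩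
  exact hthin ⟨hzK, hz⟩ ⟨hx, hxk⟩

theorem nontrivial_or_nontrivial (hK : UniformWith cc Γ K) (hx : x ∈ K) (hy : y ∈ K)
    (hxk : index x = k) (hyl : index y = l) (hl : l = k + 1) :
    (K ∩ index ⁻¹' {k}).Nontrivial ∨ (K ∩ index ⁻¹' {l}).Nontrivial := by
  obtain ⟨z, hz, hxz, hzy⟩ := hK.exists_between hx hy (lt_of_index_lt (by omega))
  have h₁ := index_mono hxz.le
  have h₂ := index_mono hzy.le
  rcases (by omega : index z = k ∨ index z = l) with h | h
  · exact .inl ⟨z, ⟨hz, h⟩, x, ⟨hx, hxk⟩, hxz.ne'⟩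
  · exact .inr ⟨z, ⟨hz, h⟩, y, ⟨hy, hyl⟩, hzy.ne⟩

end ThinFibers

theorem isoToGammaEta_of_nontrivial (hprim : ∀ i ∈ I, Primitive (c i))
    (hK : UniformWith (color c) Γ K) (h : (K ∩ index ⁻¹' {k}).Nontrivial) :
    IsoToGammaEta (c k) Γ := by
  obtain ⟨x, ⟨hxK, rfl⟩, y, ⟨hyK, hy⟩, hxy⟩ := h.exists_lt
  have hsub : Ioo x y ⊆ range (incl (index x) (index_mem x)) := fun z hz =>
    ordConnected_range_incl.out (mem_range_incl.mpr rfl) (mem_range_incl.mpr hy)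
      (Ioo_subset_Icc_self hz)
  have hV := hK.Ioo hxK hyK hxy
  rw [← image_preimage_eq_of_subset hsub, uniformWith_image_incl_iff] at hV
  exact (hprim _ (index_mem x)).isoToGammaEta hV

theorem singlePointWord_of_forall_eq (hy : index y = k) (h : ∀ z, index z = k → z = y) :
    SinglePointWord (c k) (color c y) := by
  obtain ⟨k, hk, b, rfl⟩ := exists_incl_eq y
  obtain rfl : k = _ := hy
  have hb : ∀ u, u = b := fun u => (incl k hk).injective (h _ rfl)
  exact ⟨⟨b, hb⟩, fun u => by rw [hb u]; rfl⟩

theorem false_of_etaLetterEta (hprim : ∀ i ∈ I, Primitive (c i)) (hR3 : NoEtaLetterEta I c)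
    {j₀ j₁ j₂ : ℤ} (hj₁ : j₁ = j₀ + 1) (hj₂ : j₂ = j₀ + 2)
    (hK : UniformWith (color c) Γ K) (hy : y ∈ K) (hyj : index y = j₁)
    (hsing : ∀ z, index z = j₁ → z = y) (h₀ : (K ∩ index ⁻¹' {j₀}).Nontrivial)
    (h₂ : (K ∩ index ⁻¹' {j₂}).Nontrivial) : False := by
  subst hj₁ hj₂
  obtain ⟨x, -, hx⟩ := h₀.nonempty
  obtain ⟨z, -, hz⟩ := h₂.nonempty
  exact hR3 j₀ (hx ▸ index_mem x) (hyj ▸ index_mem y) (hz ▸ index_mem z)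
    ⟨Γ, color c y, hK.mem_color hy, isoToGammaEta_of_nontrivial hprim hK h₀,
      singlePointWord_of_forall_eq hyj hsing, isoToGammaEta_of_nontrivial hprim hK h₂⟩

theorem false_of_mem_of_index_eq_add_one (hI : I.OrdConnected) (hne : ∀ i ∈ I, Nonempty (F i))
    (hprim : ∀ i ∈ I, Primitive (c i)) (hR2 : NoEtaPair I c) (hR3 : NoEtaLetterEta I c)
    (hK : UniformWith (color c) Γ K) (hx : x ∈ K) (hy : y ∈ K) (hxk : index x = k)
    (hyk : index y = k + 1) : False := by
  have hor := nontrivial_or_nontrivial hK hx hy hxk hyk rfl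
  by_cases hthin : (K ∩ index ⁻¹' {k + 1}).Subsingleton
  · obtain ⟨w, hw, hkw⟩ := exists_index_gt_of_subsingleton hK hy hyk hthin
    obtain ⟨r, hr, hrk⟩ := exists_mem_index_eq (k := k + 2) hI hne hK.ordConnected hy hw
      (by omega) (by omega)
    have h₂ := (nontrivial_or_nontrivial hK hy hr hyk hrk (by ring)).resolve_left
      hthin.not_nontrivial
    exact false_of_etaLetterEta hprim hR3 rfl rfl hK hy hyk
      (fun z hz => eq_of_index_eq_of_subsingleton hK hy hyk hthin hz)
      (hor.resolve_right hthin.not_nontrivial) h₂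
  by_cases hthin' : (K ∩ index ⁻¹' {k}).Subsingleton
  · obtain ⟨w, hw, hwk⟩ := exists_index_lt_of_subsingleton hK hx hxk hthin'
    obtain ⟨r, hr, hrk⟩ := exists_mem_index_eq (k := k - 1) hI hne hK.ordConnected hw hx
      (by omega) (by omega)
    have h₀ := (nontrivial_or_nontrivial hK hr hx hrk hxk (by ring)).resolve_right
      hthin'.not_nontrivial
    exact false_of_etaLetterEta hprim hR3 (by ring) (by ring) hK hx hxk
      (fun z hz => eq_of_index_eq_of_subsingleton hK hx hxk hthin' hz) h₀
      (hor.resolve_left hthin'.not_nontrivial)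
  exact hR2 k (hxk ▸ index_mem x) (hyk ▸ index_mem y)
    ⟨Γ, isoToGammaEta_of_nontrivial hprim hK (not_subsingleton_iff.mp hthin'),
      isoToGammaEta_of_nontrivial hprim hK (not_subsingleton_iff.mp hthin)⟩

theorem index_eq_of_mem_uniformOn (hI : I.OrdConnected) (hne : ∀ i ∈ I, Nonempty (F i))
    (hprim : ∀ i ∈ I, Primitive (c i)) (hR2 : NoEtaPair I c) (hR3 : NoEtaLetterEta I c)
    (hK : UniformOn (color c) K) (hx : x ∈ K) (hy : y ∈ K) : index x = index y := by
  obtain ⟨Γ, hK⟩ := uniformOn_iff.mp hK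
  have key : ∀ {x y}, x ∈ K → y ∈ K → ¬ index x < index y := fun hx hy hlt =>
    let ⟨z, hz, hzx⟩ := exists_mem_index_eq (k := index _ + 1) hI hne hK.ordConnected hx hy
      (by omega) (by omega)
    false_of_mem_of_index_eq_add_one hI hne hprim hR2 hR3 hK hx hz rfl hzx
  exact le_antisymm (not_lt.mp (key hy hx)) (not_lt.mp (key hx hy))

theorem subset_range_incl_of_uniformOn (hI : I.OrdConnected) (hne : ∀ i ∈ I, Nonempty (F i))
    (hprim : ∀ i ∈ I, Primitive (c i)) (hR2 : NoEtaPair I c) (hR3 : NoEtaLetterEta I c)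
    (hK : UniformOn (color c) K) (hv : incl i hi v ∈ K) : K ⊆ range (incl i hi) :=
  fun _ hz => mem_range_incl.mpr (index_eq_of_mem_uniformOn hI hne hprim hR2 hR3 hK hz hv)

theorem succClosedOn_range_incl (hI : I.OrdConnected) (hne : ∀ i ∈ I, Nonempty (F i))
    (hprim : ∀ i ∈ I, Primitive (c i)) (hR1 : NoClosedJunction I F) (hR2 : NoEtaPair I c)
    (hR3 : NoEtaLetterEta I c) (hs : SuccClosedOn (c i) univ) :
    SuccClosedOn (color c) (range (incl i hi)) := by
  obtain ⟨v⟩ := hne i hi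
  refine .of_covBy ordConnected_range_incl ⟨_, v, rfl⟩ ?_ ?_ ?_
  · rintro _ ⟨u, rfl⟩ K hK huK
    have hsub := subset_range_incl_of_uniformOn hI hne hprim hR2 hR3 hK huK
    rw [← image_preimage_eq_of_subset hsub, uniformOn_image_incl_iff] at hK
    exact hs.not_mem_of_uniformOn (mem_univ u) hK huK
  · rintro _ ⟨u, rfl⟩ y h
    exact mem_range_incl.mpr (index_eq_of_covBy hI hne hR1 h).symm
  · rintro _ ⟨u, rfl⟩ x h
    exact mem_range_incl.mpr (index_eq_of_covBy hI hne hR1 h)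

theorem range_incl_subset_of_succClosedOn (hp : Primitive (c i)) {J : Set (Σₗ i : I, F i.1)}
    (hJ : SuccClosedOn (color c) J) (hv : incl i hi v ∈ J) : range (incl i hi) ⊆ J := by
  rw [← image_univ, ← hp.eq_univ_of_succClosedOn (succClosedOn_preimage_incl hJ ⟨v, hv⟩)]
  exact image_preimage_subset _ _

theorem isBlock_range_incl (hI : I.OrdConnected) (hne : ∀ i ∈ I, Nonempty (F i))
    (hprim : ∀ i ∈ I, Primitive (c i)) (hR1 : NoClosedJunction I F) (hR2 : NoEtaPair I c)
    (hR3 : NoEtaLetterEta I c) (hi : i ∈ I) : IsBlock (color c) (range (incl i hi)) := by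
  obtain ⟨v⟩ := hne i hi
  rcases hprim i hi with ⟨hu, -⟩ | ⟨hs, -⟩
  · exact .inl ⟨uniformOn_range_incl hu, fun K hK hsub =>
      (subset_range_incl_of_uniformOn hI hne hprim hR2 hR3 hK (hsub ⟨v, rfl⟩)).antisymm hsub⟩
  · refine .inr ⟨succClosedOn_range_incl hI hne hprim hR1 hR2 hR3 hs, fun J hJ hsub => ?_⟩
    obtain ⟨_, hw⟩ := hJ.2.1
    obtain ⟨u, rfl⟩ := hsub hw
    exact hsub.antisymm (range_incl_subset_of_succClosedOn (hprim i hi) hJ hw)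

theorem eq_range_incl_of_isBlock (hI : I.OrdConnected) (hne : ∀ i ∈ I, Nonempty (F i))
    (hprim : ∀ i ∈ I, Primitive (c i)) (hR1 : NoClosedJunction I F) (hR2 : NoEtaPair I c)
    (hR3 : NoEtaLetterEta I c) (hB : IsBlock (color c) B) (hv : incl i hi v ∈ B) :
    B = range (incl i hi) := by
  rcases hB with ⟨hBu, hBmax⟩ | ⟨hBs, hBmin⟩
  · have hsub := subset_range_incl_of_uniformOn hI hne hprim hR2 hR3 hBu hv
    have htr : UniformOn (c i) (incl i hi ⁻¹' B) := by
      rwa [← uniformOn_image_incl_iff (hi := hi), image_preimage_eq_of_subset hsub]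
    exact (hBmax _ (uniformOn_range_incl (hi := hi) ((hprim i hi).uniformOn_univ htr)) hsub).symm
  · have hs := (hprim i hi).succClosedOn_univ (succClosedOn_preimage_incl hBs ⟨v, hv⟩)
    exact (hBmin _ (succClosedOn_range_incl hI hne hprim hR1 hR2 hR3 hs)
      (range_incl_subset_of_succClosedOn (hprim i hi) hBs hv)).symm

theorem ordConnected_of_mem_iff_index_mem {J : Set ℤ} (hJ : J.OrdConnected)
    (h : ∀ x, x ∈ K ↔ index x ∈ J) : K.OrdConnected := by
  rw [show K = index ⁻¹' J from ext h]
  exact hJ.preimage_mono index_mono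

theorem not_isBlock_range_incl_of_subset {U : Set (Σₗ i : I, F i.1)} (hU : UniformOn (color c) U)
    (hsub : range (incl i hi) ⊆ U) (hy : y ∈ U) (hyi : index y ≠ i) :
    ¬ IsBlock (color c) (range (incl i hi)) :=
  not_isBlock_of_ssubset hU (hsub.ssubset_of_not_subset fun h => hyi (mem_range_incl.mp (h hy)))

theorem not_isBlock_range_incl_of_closedJunction (hi₁ : i + 1 ∈ I) {mx : F i}
    {mn : F (i + 1)} (hmx : ∀ u, u ≤ mx) (hmn : ∀ u, mn ≤ u) :
    ¬ IsBlock (color c) (range (incl i hi)) := by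
  rintro (⟨hu, -⟩ | ⟨hs, -⟩)
  · obtain ⟨Γ, hΓ⟩ := uniformOn_iff.mp hu
    obtain ⟨_, ⟨u, rfl⟩, hlt⟩ := hΓ.exists_gt (mem_range_self mx)
    exact (hmx u).not_gt ((incl i hi).lt_iff_lt.mp hlt)
  · have hcov : incl i hi mx ⋖ incl (i + 1) hi₁ mn := by
      refine ⟨lt_of_index_lt (by simp), fun z hxz hzy => ?_⟩
      obtain ⟨j, hj, w, rfl⟩ := exists_incl_eq z
      have h₁ := index_mono hxz.le
      have h₂ := index_mono hzy.le
      simp only [index_incl] at h₁ h₂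
      rcases (by omega : j = i ∨ j = i + 1) with rfl | rfl
      · exact (hmx w).not_gt ((incl _ _).lt_iff_lt.mp hxz)
      · exact (hmn w).not_gt ((incl _ _).lt_iff_lt.mp hzy)
    have := mem_range_incl.mp (hs.mem_of_mem_of_covBy (mem_range_self mx) hcov)
    simp at this

theorem not_isBlock_range_incl_of_etaPair (hi₁ : i + 1 ∈ I) (h₀ : IsoToGammaEta (c i) Γ)
    (h₁ : IsoToGammaEta (c (i + 1)) Γ) : ¬ IsBlock (color c) (range (incl i hi)) := by
  have hU := (uniformWith_range_incl (hi := hi) h₀).union_union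
    (uniformWith_range_incl (hi := hi₁) h₁) subsingleton_empty (fun _ h => h.elim)
    (by rintro _ ⟨u, rfl⟩ _ (h | ⟨w, rfl⟩); exacts [h.elim, lt_of_index_lt (by simp)])
    (by rintro _ (⟨u, rfl⟩ | h) _ ⟨w, rfl⟩; exacts [lt_of_index_lt (by simp), h.elim])
    (ordConnected_of_mem_iff_index_mem (ordConnected_Icc (a := i) (b := i + 1)) fun x => by
      simp only [mem_union, mem_range_incl, mem_empty_iff_false, or_false, mem_Icc]
      omega)
  obtain ⟨p⟩ := h₁.nonempty
  exact not_isBlock_range_incl_of_subset hU.uniformOn (subset_union_left.trans subset_union_left)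
    (.inr ⟨p, rfl⟩) (by simp)

theorem not_isBlock_range_incl_of_etaLetterEta (hi₁ : i + 1 ∈ I) (hi₂ : i + 2 ∈ I) {a : S}
    (ha : a ∈ Γ) (h₀ : IsoToGammaEta (c i) Γ) (h₁ : SinglePointWord (c (i + 1)) a)
    (h₂ : IsoToGammaEta (c (i + 2)) Γ) : ¬ IsBlock (color c) (range (incl i hi)) := by
  obtain ⟨⟨p, hp⟩, hpa⟩ := h₁
  have hU := (uniformWith_range_incl (hi := hi) h₀).union_union
    (uniformWith_range_incl (hi := hi₂) h₂) (M := range (incl (i + 1) hi₁))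
    (by rintro _ ⟨u, rfl⟩ _ ⟨w, rfl⟩; rw [hp u, hp w])
    (by rintro _ ⟨u, rfl⟩; rwa [color_incl, hpa u])
    (by rintro _ ⟨u, rfl⟩ _ (⟨w, rfl⟩ | ⟨w, rfl⟩) <;> exact lt_of_index_lt (by simp))
    (by rintro _ (⟨u, rfl⟩ | ⟨u, rfl⟩) _ ⟨w, rfl⟩ <;> exact lt_of_index_lt (by simp))
    (ordConnected_of_mem_iff_index_mem (ordConnected_Icc (a := i) (b := i + 2)) fun x => by
      simp only [mem_union, mem_range_incl, mem_Icc]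
      omega)
  exact not_isBlock_range_incl_of_subset hU.uniformOn (subset_union_left.trans subset_union_left)
    (.inl (.inr ⟨p, rfl⟩)) (by simp)

end Concat

/-- Lemma `lem:merge` (Bloom–Ésik): a finite or one-sided infinite sequence
`ū = (u_i)_{i ∈ I}` of primitive generalized words does not merge — i.e., the
set of blocks of the concatenation `Π_{i ∈ I} u_i` is exactly the union of the
(embedded) blocks of the `u_i` — if and only if `ū` contains no factor matching
a left-hand side of the rewriting system `R`: no adjacent pair with the first
word right-closed and the second left-closed, no adjacent pair `Γ^η, Γ^η`, and
no triple `Γ^η, a, Γ^η` with `a ∈ Γ` a single letter. The index set `I ⊆ ℤ` is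
an interval `{0,…,n}`, `{0,1,2,…}` or `{…,-2,-1,0}`. -/
theorem no_merge_iff_irreducible {S : Type*}
    (I : Set ℤ)
    (hI : (∃ n : ℤ, 0 ≤ n ∧ I = Set.Icc 0 n) ∨ I = Set.Ici 0 ∨ I = Set.Iic 0)
    (F : ℤ → Type*) [∀ i, LinearOrder (F i)]
    (c : ∀ i : ℤ, F i → S)
    (hne : ∀ i ∈ I, Nonempty (F i))
    (hprim : ∀ i ∈ I, Primitive (c i)) :
    -- the blocks of the concatenation are exactly the embedded blocks of the `u_i`
    (∀ B : Set (Σₗ i : I, F i.1),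
        IsBlock (fun x : Σₗ i : I, F i.1 => c (ofLex x).1.1 (ofLex x).2) B ↔
        ∃ (i : ℤ) (hi : i ∈ I) (B' : Set (F i)), IsBlock (c i) B' ∧
          B = (fun y : F i => toLex ⟨⟨i, hi⟩, y⟩) '' B') ↔
    -- irreducibility with respect to the rewriting system `R`
    ((∀ i : ℤ, i ∈ I → i + 1 ∈ I →
        ¬ ((∃ mx : F i, ∀ x, x ≤ mx) ∧ (∃ mn : F (i + 1), ∀ x, mn ≤ x))) ∧
     (∀ i : ℤ, i ∈ I → i + 1 ∈ I →
        ¬ ∃ Γ : Finset S, IsoToGammaEta (c i) Γ ∧ IsoToGammaEta (c (i + 1)) Γ) ∧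
     (∀ i : ℤ, i ∈ I → i + 1 ∈ I → i + 2 ∈ I →
        ¬ ∃ (Γ : Finset S) (a : S), a ∈ Γ ∧ IsoToGammaEta (c i) Γ ∧
          SinglePointWord (c (i + 1)) a ∧ IsoToGammaEta (c (i + 2)) Γ)) := by
  have hIc : I.OrdConnected := by
    rcases hI with ⟨n, -, rfl⟩ | rfl | rfl
    exacts [Set.ordConnected_Icc, Set.ordConnected_Ici, Set.ordConnected_Iic]
  constructor
  · intro hL
    have hblock : ∀ i (hi : i ∈ I), IsBlock (Concat.color c) (Set.range (Concat.incl i hi)) :=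
      fun i hi => (hL _).mpr ⟨i, hi, Set.univ, hprim i hi, Set.image_univ.symm⟩
    exact ⟨fun i hi hi₁ ⟨⟨_, hmx⟩, ⟨_, hmn⟩⟩ =>
        Concat.not_isBlock_range_incl_of_closedJunction hi₁ hmx hmn (hblock i hi),
      fun i hi hi₁ ⟨_, h₀, h₁⟩ =>
        Concat.not_isBlock_range_incl_of_etaPair hi₁ h₀ h₁ (hblock i hi),
      fun i hi hi₁ hi₂ ⟨_, _, ha, h₀, h₁, h₂⟩ =>
        Concat.not_isBlock_range_incl_of_etaLetterEta hi₁ hi₂ ha h₀ h₁ h₂ (hblock i hi)⟩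
  · rintro ⟨hR1, hR2, hR3⟩ B
    constructor
    · intro hB
      obtain ⟨x, hx⟩ := hB.nonempty
      obtain ⟨i, hi, v, rfl⟩ := Concat.exists_incl_eq x
      refine ⟨i, hi, Set.univ, hprim i hi, ?_⟩
      rw [Set.image_univ]
      exact Concat.eq_range_incl_of_isBlock hIc hne hprim hR1 hR2 hR3 hB hx
    · rintro ⟨i, hi, B', hB', rfl⟩
      rw [(hprim i hi).eq_univ_of_isBlock hB', Set.image_univ]
      exact Concat.isBlock_range_incl hIc hne hprim hR1 hR2 hR3 hi
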